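/- arXiv:2508.18475 — 2 statements merged into one kernel-verified Lean document; each statement's English description precedes it below -/
import Mathlib

section
/- (Global Theorem) Let 𝒫 ⊂ ℝ³ be a finite pointsymmetric set with ‖P‖ ≤ 1 for all P ∈ 𝒫 (radius 1) and let S ∈ 𝒫. Let ε > 0, let θ̄1, φ̄1, θ̄2, φ̄2, ᾱ ∈ ℝ, and let w ∈ ℝ² be a unit vector. Write M̄1 = M(θ̄1,φ̄1), M̄2 = M(θ̄2,φ̄2), M̄1^θ = M^θ(θ̄1,φ̄1), M̄1^φ = M^φ(θ̄1,φ̄1), and analogously M̄2^θ, M̄2^φ. Set G = ⟨R(ᾱ)M̄1 S, w⟩ − ε·(|⟨R'(ᾱ)M̄1 S, w⟩| + |⟨R(ᾱ)M̄1^θ S, w⟩| + |⟨R(ᾱ)M̄1^φ S, w⟩|) − (9/2)ε², and for each P ∈ 𝒫 set H_P = ⟨M̄2 P, w⟩ + ε·(|⟨M̄2^θ P, w⟩| + |⟨M̄2^φ P, w⟩|) + 2ε². If G > max_{P ∈ 𝒫} H_P, then there exist no θ1, φ1, θ2, φ2, α with |θ1 − θ̄1| ≤ ε, |φ1 − φ̄1|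 ≤ ε, |θ2 − θ̄2| ≤ ε, |φ2 − φ̄2| ≤ ε, |α − ᾱ| ≤ ε such that R(α)·M(θ1,φ1)·𝒫 is contained in the interior of the convex hull of M(θ2,φ2)·𝒫. -/
noncomputable section

open Real

/-- A matrix acting on Euclidean space. -/
def act {m n : ℕ} (A : Matrix (Fin m) (Fin n) ℝ) (v : EuclideanSpace ℝ (Fin n)) :
    EuclideanSpace ℝ (Fin m) :=
  Matrix.toEuclideanLin A v

/-- Operator norm of a real matrix with respect to the Euclidean norms. -/
def opNorm {m n : ℕ} (A : Matrix (Fin m) (Fin n) ℝ) : ℝ :=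
  ‖LinearMap.toContinuousLinearMap (Matrix.toEuclideanLin A)‖

/-- The 2×2 rotation matrix by angle `α`. -/
def R (α : ℝ) : Matrix (Fin 2) (Fin 2) ℝ :=
  !![cos α, -sin α; sin α, cos α]

/-- The orthogonal projection matrix in direction `X θ φ`. -/
def M (θ φ : ℝ) : Matrix (Fin 2) (Fin 3) ℝ :=
  !![-sin θ, cos θ, 0; -cos θ * cos φ, -sin θ * cos φ, sin φ]

/-- The unit vector parametrized by spherical coordinates. -/
def X (θ φ : ℝ) : EuclideanSpace ℝ (Fin 3) :=
  (WithLp.equiv 2 (Fin 3 → ℝ)).symm ![cos θ * sin φ, sin θ * sin φ, cos φ]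

/-- Rotation about the x-axis. -/
def Rx (α : ℝ) : Matrix (Fin 3) (Fin 3) ℝ :=
  !![1, 0, 0; 0, cos α, -sin α; 0, sin α, cos α]

/-- Rotation about the y-axis. -/
def Ry (α : ℝ) : Matrix (Fin 3) (Fin 3) ℝ :=
  !![cos α, 0, -sin α; 0, 1, 0; sin α, 0, cos α]

/-- Rotation about the z-axis. -/
def Rz (α : ℝ) : Matrix (Fin 3) (Fin 3) ℝ :=
  !![cos α, -sin α, 0; sin α, cos α, 0; 0, 0, 1]

/-- Entrywise derivative of the projection matrix with respect to θ. -/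
def Mθ (θ φ : ℝ) : Matrix (Fin 2) (Fin 3) ℝ :=
  !![-cos θ, -sin θ, 0; sin θ * cos φ, -cos θ * cos φ, 0]

/-- Entrywise derivative of the projection matrix with respect to φ. -/
def Mφ (θ φ : ℝ) : Matrix (Fin 2) (Fin 3) ℝ :=
  !![0, 0, 0; cos θ * sin φ, sin θ * sin φ, cos φ]

/-- Derivative of the 2×2 rotation matrix. -/
def R' (α : ℝ) : Matrix (Fin 2) (Fin 2) ℝ :=
  !![-sin α, -cos α; cos α, -sin α]

open scoped RealInnerProductSpace

/-!
Along the segment from `(θ̄, φ̄, ᾱ)` to `(θ, φ, α)` the point `R(α) M(θ, φ) S` moves on a smooth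
path whose second derivative has norm at most `(|Δθ| + |Δφ| + |Δα|)² ‖S‖`: it is a combination of
products of a rotation (`R`, `R'` or `-R`) with `M` or one of its first or second partial
derivatives, and each of these matrices is a contraction. Taylor's theorem with this remainder gives
`G ≤ ⟪R(α) M(θ₁, φ₁) S, w⟫` and `⟪M(θ₂, φ₂) P, w⟫ ≤ H_P`. If `R(α) M(θ₁, φ₁) 𝒫` lay in the convex
hull of `M(θ₂, φ₂) 𝒫`, the linear functional `⟪·, w⟫` would be at most its maximum over the
vertices, attained at some `P ∈ 𝒫`, contradicting `G > H_P`.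
-/

theorem norm_sub_sub_deriv_le_of_norm_deriv2_le {E : Type*} [NormedAddCommGroup E]
    [NormedSpace ℝ E] {f f' f'' : ℝ → E} {C : ℝ}
    (hf : ∀ t, HasDerivAt f (f' t) t) (hf' : ∀ t, HasDerivAt f' (f'' t) t)
    (hC : ∀ t ∈ Set.Icc (0 : ℝ) 1, ‖f'' t‖ ≤ C) :
    ‖f 1 - f 0 - f' 0‖ ≤ C / 2 := by
  have hderiv : ∀ t ∈ Set.Icc (0 : ℝ) 1, ‖f' t - f' 0‖ ≤ C * t :=
    image_norm_le_of_norm_deriv_right_le_deriv_boundary' (f := fun t => f' t - f' 0)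
      (fun t _ => ((hf' t).sub_const _).continuousAt.continuousWithinAt)
      (fun t _ => ((hf' t).sub_const _).hasDerivWithinAt) (by simp)
      (continuous_const_mul C).continuousOn
      (fun t _ => ((hasDerivAt_id t).const_mul C).hasDerivWithinAt)
      (fun t ht => by simpa using hC t (Set.Ico_subset_Icc_self ht))
  have hf_sub : ∀ t, HasDerivAt (fun t => f t - f 0 - t • f' 0) (f' t - f' 0) t := fun t => by
    simpa using ((hf t).sub_const (f 0)).fun_sub ((hasDerivAt_id t).smul_const (f' 0))
  have := image_norm_le_of_norm_deriv_right_le_deriv_boundary'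
      (f := fun t => f t - f 0 - t • f' 0) (B := fun t => C * t ^ 2 / 2)
      (fun t _ => (hf_sub t).continuousAt.continuousWithinAt)
      (fun t _ => (hf_sub t).hasDerivWithinAt) (by simp) (by fun_prop)
      (fun t _ => (((hasDerivAt_pow 2 t).const_mul C).div_const 2).hasDerivWithinAt)
      (fun t ht => (hderiv t (Set.Ico_subset_Icc_self ht)).trans_eq (by ring))
      (Set.right_mem_Icc.2 zero_le_one)
  simpa using this

theorem norm_smul_add_smul_le {E : Type*} [SeminormedAddCommGroup E] [NormedSpace ℝ E]
    (x y : ℝ) (u v : E) : ‖x • u + y • v‖ ≤ |x| * ‖u‖ + |y| * ‖v‖ := by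
  simpa only [norm_smul, Real.norm_eq_abs] using norm_add_le (x • u) (y • v)

theorem inner_le_of_mem_convexHull {E : Type*} [NormedAddCommGroup E] [InnerProductSpace ℝ E]
    {s : Set E} {z w : E} {c : ℝ} (hz : z ∈ convexHull ℝ s) (hs : ∀ p ∈ s, ⟪p, w⟫ ≤ c) :
    ⟪z, w⟫ ≤ c :=
  convexHull_min hs (convex_halfSpace_le
    ⟨fun u v => inner_add_left u v w, fun r u => real_inner_smul_left u w r⟩ c) hz

section act

variable {m n : ℕ}

theorem act_apply (A : Matrix (Fin m) (Fin n) ℝ) (v : EuclideanSpace ℝ (Fin n)) (i : Fin m) :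
    act A v i = ∑ j, A i j * v j := by
  simp [act, Matrix.toLpLin_apply, Matrix.mulVec, dotProduct]

theorem add_act (A B : Matrix (Fin m) (Fin n) ℝ) (v : EuclideanSpace ℝ (Fin n)) :
    act (A + B) v = act A v + act B v := by
  simp [act]

theorem smul_act (c : ℝ) (A : Matrix (Fin m) (Fin n) ℝ) (v : EuclideanSpace ℝ (Fin n)) :
    act (c • A) v = c • act A v := by
  simp [act]

theorem neg_act (A : Matrix (Fin m) (Fin n) ℝ) (v : EuclideanSpace ℝ (Fin n)) :
    act (-A) v = -act A v := by
  simp [act]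

theorem act_add (A : Matrix (Fin m) (Fin n) ℝ) (u v : EuclideanSpace ℝ (Fin n)) :
    act A (u + v) = act A u + act A v :=
  map_add _ u v

theorem act_smul (A : Matrix (Fin m) (Fin n) ℝ) (c : ℝ) (v : EuclideanSpace ℝ (Fin n)) :
    act A (c • v) = c • act A v :=
  map_smul _ c v

theorem act_zero (A : Matrix (Fin m) (Fin n) ℝ) : act A 0 = 0 :=
  map_zero _

theorem one_act (v : EuclideanSpace ℝ (Fin n)) : act 1 v = v := by
  simp [act]

theorem hasDerivAt_act {A : ℝ → Matrix (Fin m) (Fin n) ℝ} {A' : Matrix (Fin m) (Fin n) ℝ}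
    {v : ℝ → EuclideanSpace ℝ (Fin n)} {v' : EuclideanSpace ℝ (Fin n)} {t : ℝ}
    (hA : ∀ i j, HasDerivAt (fun s => A s i j) (A' i j) t) (hv : HasDerivAt v v' t) :
    HasDerivAt (fun s => act (A s) (v s)) (act A' (v t) + act (A t) v') t := by
  have hcoord : ∀ j, HasDerivAt (fun s => v s j) (v' j) t := fun j =>
    (PiLp.hasFDerivAt_apply 2 (v t) j).comp_hasDerivAt t hv
  have : HasDerivAt (fun s => WithLp.ofLp (act (A s) (v s)))
      (WithLp.ofLp (act A' (v t) + act (A t) v')) t := by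
    refine hasDerivAt_pi.2 fun i => ?_
    simp only [act_apply, PiLp.add_apply, ← Finset.sum_add_distrib]
    exact HasDerivAt.fun_sum fun j _ => ((hA i j).mul (hcoord j)).congr_deriv (by ring)
  exact (PiLp.hasFDerivAt_toLp 2 _).comp_hasDerivAt t this

end act

theorem sq_add_sq_rot (γ a b : ℝ) :
    (cos γ * a + sin γ * b) ^ 2 + (-sin γ * a + cos γ * b) ^ 2 = a ^ 2 + b ^ 2 := by
  linear_combination (a ^ 2 + b ^ 2) * sin_sq_add_cos_sq γ

section rotation

theorem R_zero : R 0 = 1 := by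
  simp [R, Matrix.one_fin_two]

theorem R'_eq_R_add_pi_div_two (α : ℝ) : R' α = R (α + π / 2) := by
  simp [R, R', cos_add_pi_div_two, sin_add_pi_div_two]

theorem norm_act_R (α : ℝ) (v : EuclideanSpace ℝ (Fin 2)) : ‖act (R α) v‖ = ‖v‖ := by
  simp only [EuclideanSpace.norm_eq, act_apply, Fin.sum_univ_two, R, Matrix.of_apply,
    Matrix.cons_val', Matrix.cons_val_zero, Matrix.cons_val_one, Matrix.cons_val_fin_one,
    Real.norm_eq_abs, sq_abs]
  congr 1
  linear_combination sq_add_sq_rot α (v 0) (-v 1)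

theorem norm_act_R' (α : ℝ) (v : EuclideanSpace ℝ (Fin 2)) : ‖act (R' α) v‖ = ‖v‖ := by
  rw [R'_eq_R_add_pi_div_two, norm_act_R]

variable {β : ℝ → ℝ} {β' t : ℝ}

theorem hasDerivAt_R_apply (hβ : HasDerivAt β β' t) (i j : Fin 2) :
    HasDerivAt (fun s => R (β s) i j) ((β' • R' (β t)) i j) t := by
  fin_cases i <;> fin_cases j <;>
    simp only [R, R', Matrix.smul_apply, Matrix.of_apply, Matrix.cons_val', Matrix.cons_val_zero,
      Matrix.cons_val_one, Matrix.cons_val_fin_one, Fin.zero_eta, Fin.mk_one, Fin.isValue,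
      smul_eq_mul]
  · exact hβ.cos.congr_deriv (by ring)
  · exact hβ.sin.fun_neg.congr_deriv (by ring)
  · exact hβ.sin.congr_deriv (by ring)
  · exact hβ.cos.congr_deriv (by ring)

theorem hasDerivAt_R'_apply (hβ : HasDerivAt β β' t) (i j : Fin 2) :
    HasDerivAt (fun s => R' (β s) i j) ((β' • -R (β t)) i j) t := by
  fin_cases i <;> fin_cases j <;>
    simp only [R, R', Matrix.smul_apply, Matrix.neg_apply, Matrix.of_apply, Matrix.cons_val',
      Matrix.cons_val_zero, Matrix.cons_val_one, Matrix.cons_val_fin_one, Fin.zero_eta, Fin.mk_one,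
      Fin.isValue, smul_eq_mul]
  · exact hβ.sin.fun_neg.congr_deriv (by ring)
  · exact hβ.cos.fun_neg.congr_deriv (by ring)
  · exact hβ.cos.congr_deriv (by ring)
  · exact hβ.sin.fun_neg.congr_deriv (by ring)

variable {v : ℝ → EuclideanSpace ℝ (Fin 2)} {v' : EuclideanSpace ℝ (Fin 2)}

theorem hasDerivAt_act_R (hβ : HasDerivAt β β' t) (hv : HasDerivAt v v' t) :
    HasDerivAt (fun s => act (R (β s)) (v s))
      (β' • act (R' (β t)) (v t) + act (R (β t)) v') t := by
  simpa only [smul_act] using hasDerivAt_act (hasDerivAt_R_apply hβ) hv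

theorem hasDerivAt_act_R' (hβ : HasDerivAt β β' t) (hv : HasDerivAt v v' t) :
    HasDerivAt (fun s => act (R' (β s)) (v s))
      (-(β' • act (R (β t)) (v t)) + act (R' (β t)) v') t := by
  simpa only [smul_act, neg_act, smul_neg] using hasDerivAt_act (hasDerivAt_R'_apply hβ) hv

end rotation

theorem norm_act_le_of_sq_add_sq_le {a b c d e f : ℝ} {v : EuclideanSpace ℝ (Fin 3)}
    (h : (a * v 0 + b * v 1 + c * v 2) ^ 2 + (d * v 0 + e * v 1 + f * v 2) ^ 2
      ≤ v 0 ^ 2 + v 1 ^ 2 + v 2 ^ 2) :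
    ‖act !![a, b, c; d, e, f] v‖ ≤ ‖v‖ := by
  simpa [EuclideanSpace.norm_eq, act_apply, Fin.sum_univ_succ, add_assoc] using
    Real.sqrt_le_sqrt h

section projection

def Mθθ (θ φ : ℝ) : Matrix (Fin 2) (Fin 3) ℝ :=
  !![sin θ, -cos θ, 0; cos θ * cos φ, sin θ * cos φ, 0]

def Mθφ (θ φ : ℝ) : Matrix (Fin 2) (Fin 3) ℝ :=
  !![0, 0, 0; -sin θ * sin φ, cos θ * sin φ, 0]

def Mφφ (θ φ : ℝ) : Matrix (Fin 2) (Fin 3) ℝ :=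
  !![0, 0, 0; cos θ * cos φ, sin θ * cos φ, -sin φ]

/-- `dM θ φ x y` and `d2M θ φ x y` are the first and second derivatives at `s = 0` of
`s ↦ M (θ + s * x) (φ + s * y)`. -/
def dM (θ φ x y : ℝ) : Matrix (Fin 2) (Fin 3) ℝ :=
  x • Mθ θ φ + y • Mφ θ φ

def d2M (θ φ x y : ℝ) : Matrix (Fin 2) (Fin 3) ℝ :=
  x • (x • Mθθ θ φ + y • Mθφ θ φ) + y • (x • Mθφ θ φ + y • Mφφ θ φ)

section norm

variable (θ φ : ℝ) (v : EuclideanSpace ℝ (Fin 3))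

-- Each of these matrices is the rotation `v ↦ (u₁, u₂, v 2)` by `-θ` about the third axis
-- followed by a contraction built from a rotation by `φ`.

theorem norm_act_M_le : ‖act (M θ φ) v‖ ≤ ‖v‖ := by
  refine norm_act_le_of_sq_add_sq_le ?_
  set u₁ := cos θ * v 0 + sin θ * v 1
  set u₂ := -sin θ * v 0 + cos θ * v 1
  nlinarith [sq_add_sq_rot θ (v 0) (v 1), sq_add_sq_rot φ u₁ (-v 2),
    sq_nonneg (sin φ * u₁ + cos φ * v 2)]

theorem norm_act_Mθ_le : ‖act (Mθ θ φ) v‖ ≤ ‖v‖ := by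
  refine norm_act_le_of_sq_add_sq_le ?_
  set u₁ := cos θ * v 0 + sin θ * v 1
  set u₂ := -sin θ * v 0 + cos θ * v 1
  nlinarith [sq_add_sq_rot θ (v 0) (v 1), sq_add_sq_rot φ u₂ 0, sq_nonneg (sin φ * u₂)]

theorem norm_act_Mφ_le : ‖act (Mφ θ φ) v‖ ≤ ‖v‖ := by
  refine norm_act_le_of_sq_add_sq_le ?_
  set u₁ := cos θ * v 0 + sin θ * v 1
  set u₂ := -sin θ * v 0 + cos θ * v 1
  nlinarith [sq_add_sq_rot θ (v 0) (v 1), sq_add_sq_rot φ (v 2) u₁, sq_nonneg u₂,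
    sq_nonneg (-sin φ * v 2 + cos φ * u₁)]

theorem norm_act_Mθθ_le : ‖act (Mθθ θ φ) v‖ ≤ ‖v‖ := by
  refine norm_act_le_of_sq_add_sq_le ?_
  set u₁ := cos θ * v 0 + sin θ * v 1
  set u₂ := -sin θ * v 0 + cos θ * v 1
  nlinarith [sq_add_sq_rot θ (v 0) (v 1), sq_add_sq_rot φ u₁ 0, sq_nonneg (sin φ * u₁),
    sq_nonneg (v 2)]

theorem norm_act_Mθφ_le : ‖act (Mθφ θ φ) v‖ ≤ ‖v‖ := by
  refine norm_act_le_of_sq_add_sq_le ?_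
  set u₁ := cos θ * v 0 + sin θ * v 1
  set u₂ := -sin θ * v 0 + cos θ * v 1
  nlinarith [sq_add_sq_rot θ (v 0) (v 1), sq_add_sq_rot φ u₂ 0, sq_nonneg (cos φ * u₂),
    sq_nonneg u₁, sq_nonneg (v 2)]

theorem norm_act_Mφφ_le : ‖act (Mφφ θ φ) v‖ ≤ ‖v‖ := by
  refine norm_act_le_of_sq_add_sq_le ?_
  set u₁ := cos θ * v 0 + sin θ * v 1
  set u₂ := -sin θ * v 0 + cos θ * v 1
  nlinarith [sq_add_sq_rot θ (v 0) (v 1), sq_add_sq_rot φ u₁ (-v 2), sq_nonneg u₂,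
    sq_nonneg (sin φ * u₁ + cos φ * v 2)]

theorem norm_act_dM_le (x y : ℝ) : ‖act (dM θ φ x y) v‖ ≤ (|x| + |y|) * ‖v‖ := by
  rw [dM, add_act, smul_act, smul_act]
  calc _ ≤ |x| * ‖act (Mθ θ φ) v‖ + |y| * ‖act (Mφ θ φ) v‖ :=
        norm_smul_add_smul_le _ _ _ _
    _ ≤ |x| * ‖v‖ + |y| * ‖v‖ := by
        gcongr
        exacts [norm_act_Mθ_le θ φ v, norm_act_Mφ_le θ φ v]
    _ = (|x| + |y|) * ‖v‖ := by ring

theorem norm_act_d2M_le (x y : ℝ) : ‖act (d2M θ φ x y) v‖ ≤ (|x| + |y|) ^ 2 * ‖v‖ := by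
  simp only [d2M, add_act, smul_act]
  have hθθ := norm_act_Mθθ_le θ φ v
  have hθφ := norm_act_Mθφ_le θ φ v
  have hφφ := norm_act_Mφφ_le θ φ v
  calc _ ≤ |x| * (|x| * ‖act (Mθθ θ φ) v‖ + |y| * ‖act (Mθφ θ φ) v‖)
        + |y| * (|x| * ‖act (Mθφ θ φ) v‖ + |y| * ‖act (Mφφ θ φ) v‖) := by
        refine (norm_smul_add_smul_le _ _ _ _).trans ?_
        gcongr <;> exact norm_smul_add_smul_le _ _ _ _
    _ ≤ |x| * (|x| * ‖v‖ + |y| * ‖v‖) + |y| * (|x| * ‖v‖ + |y| * ‖v‖) := by gcongr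
    _ = (|x| + |y|) ^ 2 * ‖v‖ := by ring

end norm

variable {θ φ : ℝ → ℝ} {θ' φ' t : ℝ}

theorem hasDerivAt_M_apply (hθ : HasDerivAt θ θ' t) (hφ : HasDerivAt φ φ' t)
    (i : Fin 2) (j : Fin 3) :
    HasDerivAt (fun s => M (θ s) (φ s) i j) (dM (θ t) (φ t) θ' φ' i j) t := by
  fin_cases i <;> fin_cases j <;>
    simp only [M, dM, Mθ, Mφ, Matrix.add_apply, Matrix.smul_apply, Matrix.of_apply,
      Matrix.cons_val', Matrix.cons_val_zero, Matrix.cons_val_one, Matrix.cons_val,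
      Matrix.cons_val_fin_one, Fin.zero_eta, Fin.mk_one, Fin.reduceFinMk, Fin.isValue, smul_eq_mul]
  · exact hθ.sin.fun_neg.congr_deriv (by ring)
  · exact hθ.cos.congr_deriv (by ring)
  · exact (hasDerivAt_const _ _).congr_deriv (by ring)
  · exact (hθ.cos.fun_neg.mul hφ.cos).congr_deriv (by ring)
  · exact (hθ.sin.fun_neg.mul hφ.cos).congr_deriv (by ring)
  · exact hφ.sin.congr_deriv (by ring)

theorem hasDerivAt_Mθ_apply (hθ : HasDerivAt θ θ' t) (hφ : HasDerivAt φ φ' t)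
    (i : Fin 2) (j : Fin 3) :
    HasDerivAt (fun s => Mθ (θ s) (φ s) i j)
      ((θ' • Mθθ (θ t) (φ t) + φ' • Mθφ (θ t) (φ t)) i j) t := by
  fin_cases i <;> fin_cases j <;>
    simp only [Mθ, Mθθ, Mθφ, Matrix.add_apply, Matrix.smul_apply, Matrix.of_apply,
      Matrix.cons_val', Matrix.cons_val_zero, Matrix.cons_val_one, Matrix.cons_val,
      Matrix.cons_val_fin_one, Fin.zero_eta, Fin.mk_one, Fin.reduceFinMk, Fin.isValue, smul_eq_mul]
  · exact hθ.cos.fun_neg.congr_deriv (by ring)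
  · exact hθ.sin.fun_neg.congr_deriv (by ring)
  · exact (hasDerivAt_const _ _).congr_deriv (by ring)
  · exact (hθ.sin.mul hφ.cos).congr_deriv (by ring)
  · exact (hθ.cos.fun_neg.mul hφ.cos).congr_deriv (by ring)
  · exact (hasDerivAt_const _ _).congr_deriv (by ring)

theorem hasDerivAt_Mφ_apply (hθ : HasDerivAt θ θ' t) (hφ : HasDerivAt φ φ' t)
    (i : Fin 2) (j : Fin 3) :
    HasDerivAt (fun s => Mφ (θ s) (φ s) i j)
      ((θ' • Mθφ (θ t) (φ t) + φ' • Mφφ (θ t) (φ t)) i j) t := by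
  fin_cases i <;> fin_cases j <;>
    simp only [Mφ, Mθφ, Mφφ, Matrix.add_apply, Matrix.smul_apply, Matrix.of_apply,
      Matrix.cons_val', Matrix.cons_val_zero, Matrix.cons_val_one, Matrix.cons_val,
      Matrix.cons_val_fin_one, Fin.zero_eta, Fin.mk_one, Fin.reduceFinMk, Fin.isValue, smul_eq_mul]
  · exact (hasDerivAt_const _ _).congr_deriv (by ring)
  · exact (hasDerivAt_const _ _).congr_deriv (by ring)
  · exact (hasDerivAt_const _ _).congr_deriv (by ring)
  · exact (hθ.cos.mul hφ.sin).congr_deriv (by ring)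
  · exact (hθ.sin.mul hφ.sin).congr_deriv (by ring)
  · exact hφ.cos.congr_deriv (by ring)

theorem hasDerivAt_dM_apply {x y : ℝ} (hθ : HasDerivAt θ x t) (hφ : HasDerivAt φ y t)
    (i : Fin 2) (j : Fin 3) :
    HasDerivAt (fun s => dM (θ s) (φ s) x y i j) (d2M (θ t) (φ t) x y i j) t := by
  simpa only [dM, d2M, Matrix.add_apply, Matrix.smul_apply, smul_eq_mul] using
    ((hasDerivAt_Mθ_apply hθ hφ i j).const_mul x).fun_add
      ((hasDerivAt_Mφ_apply hθ hφ i j).const_mul y)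

theorem hasDerivAt_act_M (hθ : HasDerivAt θ θ' t) (hφ : HasDerivAt φ φ' t)
    (v : EuclideanSpace ℝ (Fin 3)) :
    HasDerivAt (fun s => act (M (θ s) (φ s)) v) (act (dM (θ t) (φ t) θ' φ') v) t := by
  simpa only [act_zero, add_zero] using
    hasDerivAt_act (hasDerivAt_M_apply hθ hφ) (hasDerivAt_const t v)

theorem hasDerivAt_act_dM {x y : ℝ} (hθ : HasDerivAt θ x t) (hφ : HasDerivAt φ y t)
    (v : EuclideanSpace ℝ (Fin 3)) :
    HasDerivAt (fun s => act (dM (θ s) (φ s) x y) v) (act (d2M (θ t) (φ t) x y) v) t := by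
  simpa only [act_zero, add_zero] using
    hasDerivAt_act (hasDerivAt_dM_apply hθ hφ) (hasDerivAt_const t v)

end projection

section taylor

variable (S : EuclideanSpace ℝ (Fin 3)) (w : EuclideanSpace ℝ (Fin 2)) (θ φ α x y a : ℝ)

theorem norm_act_R_M_sub_sub_le :
    ‖act (R (α + a)) (act (M (θ + x) (φ + y)) S) - act (R α) (act (M θ φ) S)
      - (a • act (R' α) (act (M θ φ) S) + act (R α) (act (dM θ φ x y) S))‖
      ≤ (|x| + |y| + |a|) ^ 2 * ‖S‖ / 2 := by
  have line : ∀ c d t : ℝ, HasDerivAt (fun s => c + s * d) d t := fun c d t => by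
    simpa using ((hasDerivAt_id t).mul_const d).const_add c
  have hM := fun t => hasDerivAt_act_M (line θ x t) (line φ y t) S
  have hdM := fun t => hasDerivAt_act_dM (line θ x t) (line φ y t) S
  have hr := fun t => hasDerivAt_act_R (line α a t) (hM t)
  have hr' := fun t => ((hasDerivAt_act_R' (line α a t) (hM t)).const_smul a).add
    (hasDerivAt_act_R (line α a t) (hdM t))
  have := norm_sub_sub_deriv_le_of_norm_deriv2_le (C := (|x| + |y| + |a|) ^ 2 * ‖S‖) hr hr'
    fun t _ => ?_
  · simpa using this
  set β := α + t * a
  set p := act (M (θ + t * x) (φ + t * y)) S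
  set p' := act (dM (θ + t * x) (φ + t * y) x y) S
  have hp : ‖p‖ ≤ ‖S‖ := norm_act_M_le _ _ S
  have hp' : ‖p'‖ ≤ (|x| + |y|) * ‖S‖ := norm_act_dM_le _ _ S x y
  have hp'' := norm_act_d2M_le (θ + t * x) (φ + t * y) S x y
  calc ‖a • (-(a • act (R β) p) + act (R' β) p')
          + (a • act (R' β) p' + act (R β) (act (d2M (θ + t * x) (φ + t * y) x y) S))‖
      ≤ |a| * (|a| * ‖p‖ + ‖p'‖) + (|a| * ‖p'‖ + (|x| + |y|) ^ 2 * ‖S‖) := by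
        refine (norm_add_le _ _).trans (add_le_add ?_ ((norm_add_le _ _).trans ?_))
        · rw [norm_smul, Real.norm_eq_abs]
          gcongr
          refine (norm_add_le _ _).trans_eq ?_
          rw [norm_neg, norm_smul, norm_act_R, norm_act_R', Real.norm_eq_abs]
        · rw [norm_smul, norm_act_R', norm_act_R, Real.norm_eq_abs]
          gcongr
    _ ≤ |a| * (|a| * ‖S‖ + (|x| + |y|) * ‖S‖)
          + (|a| * ((|x| + |y|) * ‖S‖) + (|x| + |y|) ^ 2 * ‖S‖) := by
        gcongr
    _ = (|x| + |y| + |a|) ^ 2 * ‖S‖ := by ring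

theorem abs_inner_R_M_sub_sub_le :
    |⟪act (R (α + a)) (act (M (θ + x) (φ + y)) S), w⟫ - ⟪act (R α) (act (M θ φ) S), w⟫
      - (a * ⟪act (R' α) (act (M θ φ) S), w⟫ + x * ⟪act (R α) (act (Mθ θ φ) S), w⟫
        + y * ⟪act (R α) (act (Mφ θ φ) S), w⟫)|
      ≤ (|x| + |y| + |a|) ^ 2 * ‖S‖ / 2 * ‖w‖ := by
  refine le_trans (le_of_eq ?_) ((abs_real_inner_le_norm _ w).trans
    (mul_le_mul_of_nonneg_right (norm_act_R_M_sub_sub_le S θ φ α x y a) (norm_nonneg w)))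
  simp only [dM, add_act, smul_act, act_add, act_smul, inner_sub_left, inner_add_left,
    inner_smul_left, RCLike.conj_to_real]
  ring_nf

end taylor

theorem abs_mul_le_mul_abs_of_abs_le {x ε : ℝ} (hx : |x| ≤ ε) (c : ℝ) : |x * c| ≤ ε * |c| := by
  rw [abs_mul]
  exact mul_le_mul_of_nonneg_right hx (abs_nonneg c)

section box

variable {S : EuclideanSpace ℝ (Fin 3)} {w : EuclideanSpace ℝ (Fin 2)} {ε θ₀ φ₀ θ φ : ℝ}

theorem inner_R_M_ge_of_abs_sub_le (hS : ‖S‖ ≤ 1) (hw : ‖w‖ ≤ 1) {α₀ α : ℝ}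
    (hθ : |θ - θ₀| ≤ ε) (hφ : |φ - φ₀| ≤ ε) (hα : |α - α₀| ≤ ε) :
    ⟪act (R α₀) (act (M θ₀ φ₀) S), w⟫
      - ε * (|⟪act (R' α₀) (act (M θ₀ φ₀) S), w⟫| + |⟪act (R α₀) (act (Mθ θ₀ φ₀) S), w⟫|
        + |⟪act (R α₀) (act (Mφ θ₀ φ₀) S), w⟫|) - 9 * ε ^ 2 / 2
      ≤ ⟪act (R α) (act (M θ φ) S), w⟫ := by
  have h := abs_inner_R_M_sub_sub_le S w θ₀ φ₀ α₀ (θ - θ₀) (φ - φ₀) (α - α₀)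
  simp only [add_sub_cancel] at h
  have hrem : (|θ - θ₀| + |φ - φ₀| + |α - α₀|) ^ 2 * ‖S‖ / 2 * ‖w‖ ≤ 9 * ε ^ 2 / 2 := by
    have h3 : (|θ - θ₀| + |φ - φ₀| + |α - α₀|) ^ 2 ≤ (3 * ε) ^ 2 := by
      gcongr
      linarith
    calc _ ≤ (3 * ε) ^ 2 * 1 / 2 * 1 := by gcongr
      _ = 9 * ε ^ 2 / 2 := by ring
  have hTα := abs_le.1 (abs_mul_le_mul_abs_of_abs_le hα ⟪act (R' α₀) (act (M θ₀ φ₀) S), w⟫)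
  have hTθ := abs_le.1 (abs_mul_le_mul_abs_of_abs_le hθ ⟪act (R α₀) (act (Mθ θ₀ φ₀) S), w⟫)
  have hTφ := abs_le.1 (abs_mul_le_mul_abs_of_abs_le hφ ⟪act (R α₀) (act (Mφ θ₀ φ₀) S), w⟫)
  linarith [(abs_le.1 h).1, hTα.1, hTθ.1, hTφ.1]

theorem inner_M_le_of_abs_sub_le (hS : ‖S‖ ≤ 1) (hw : ‖w‖ ≤ 1)
    (hθ : |θ - θ₀| ≤ ε) (hφ : |φ - φ₀| ≤ ε) :
    ⟪act (M θ φ) S, w⟫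
      ≤ ⟪act (M θ₀ φ₀) S, w⟫
        + ε * (|⟪act (Mθ θ₀ φ₀) S, w⟫| + |⟪act (Mφ θ₀ φ₀) S, w⟫|) + 2 * ε ^ 2 := by
  have h := abs_inner_R_M_sub_sub_le S w θ₀ φ₀ 0 (θ - θ₀) (φ - φ₀) 0
  simp only [add_sub_cancel, add_zero, R_zero, one_act, zero_mul, zero_add, abs_zero] at h
  have hrem : (|θ - θ₀| + |φ - φ₀|) ^ 2 * ‖S‖ / 2 * ‖w‖ ≤ 2 * ε ^ 2 := by
    have h2 : (|θ - θ₀| + |φ - φ₀|) ^ 2 ≤ (2 * ε) ^ 2 := by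
      gcongr
      linarith
    calc _ ≤ (2 * ε) ^ 2 * 1 / 2 * 1 := by gcongr
      _ = 2 * ε ^ 2 := by ring
  have hUθ := abs_le.1 (abs_mul_le_mul_abs_of_abs_le hθ ⟪act (Mθ θ₀ φ₀) S, w⟫)
  have hUφ := abs_le.1 (abs_mul_le_mul_abs_of_abs_le hφ ⟪act (Mφ θ₀ φ₀) S, w⟫)
  linarith [(abs_le.1 h).2, hUθ.2, hUφ.2]

end box

theorem global_theorem_general (V : Set (EuclideanSpace ℝ (Fin 3))) (hfin : V.Finite)
    (hrad : ∀ P ∈ V, ‖P‖ ≤ 1)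
    (S : EuclideanSpace ℝ (Fin 3)) (hS : S ∈ V)
    (ε θ'1 φ'1 θ'2 φ'2 α' : ℝ)
    (w : EuclideanSpace ℝ (Fin 2)) (hw : ‖w‖ = 1)
    (hGH : ∀ P ∈ V,
      ⟪act (R α') (act (M θ'1 φ'1) S), w⟫
        - ε * (|⟪act (R' α') (act (M θ'1 φ'1) S), w⟫|
          + |⟪act (R α') (act (Mθ θ'1 φ'1) S), w⟫|
          + |⟪act (R α') (act (Mφ θ'1 φ'1) S), w⟫|)
        - 9 * ε ^ 2 / 2
      > ⟪act (M θ'2 φ'2) P, w⟫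
        + ε * (|⟪act (Mθ θ'2 φ'2) P, w⟫| + |⟪act (Mφ θ'2 φ'2) P, w⟫|)
        + 2 * ε ^ 2) :
    ¬ ∃ θ1 φ1 θ2 φ2 α : ℝ,
      |θ1 - θ'1| ≤ ε ∧ |φ1 - φ'1| ≤ ε ∧ |θ2 - θ'2| ≤ ε ∧ |φ2 - φ'2| ≤ ε ∧ |α - α'| ≤ ε ∧
      act (R α) '' (act (M θ1 φ1) '' V) ⊆
        interior (convexHull ℝ (act (M θ2 φ2) '' V)) := by
  rintro ⟨θ1, φ1, θ2, φ2, α, hθ1, hφ1, hθ2, hφ2, hα, hsub⟩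
  obtain ⟨P, hP, hPmax⟩ :=
    Set.exists_max_image V (fun P => ⟪act (M θ2 φ2) P, w⟫) hfin ⟨S, hS⟩
  have hinside : ⟪act (R α) (act (M θ1 φ1) S), w⟫ ≤ ⟪act (M θ2 φ2) P, w⟫ :=
    inner_le_of_mem_convexHull
      (interior_subset (hsub (Set.mem_image_of_mem _ (Set.mem_image_of_mem _ hS))))
      (by rintro _ ⟨Q, hQ, rfl⟩; exact hPmax Q hQ)
  have hlower := inner_R_M_ge_of_abs_sub_le (hrad S hS) hw.le hθ1 hφ1 hα
  have hupper := inner_M_le_of_abs_sub_le (hrad P hP) hw.le hθ2 hφ2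
  linarith [hGH P hP]

/-- The Global Theorem: a certificate excluding solutions of Rupert's problem in a whole
ε-box around `(θ̄1, φ̄1, θ̄2, φ̄2, ᾱ)`. -/
theorem global_theorem (V : Set (EuclideanSpace ℝ (Fin 3))) (hfin : V.Finite)
    (hsym : ∀ P ∈ V, -P ∈ V) (hrad : ∀ P ∈ V, ‖P‖ ≤ 1)
    (S : EuclideanSpace ℝ (Fin 3)) (hS : S ∈ V)
    (ε θ'1 φ'1 θ'2 φ'2 α' : ℝ) (hε : 0 < ε)
    (w : EuclideanSpace ℝ (Fin 2)) (hw : ‖w‖ = 1)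
    (hGH : ∀ P ∈ V,
      ⟪act (R α') (act (M θ'1 φ'1) S), w⟫
        - ε * (|⟪act (R' α') (act (M θ'1 φ'1) S), w⟫|
          + |⟪act (R α') (act (Mθ θ'1 φ'1) S), w⟫|
          + |⟪act (R α') (act (Mφ θ'1 φ'1) S), w⟫|)
        - 9 * ε ^ 2 / 2
      > ⟪act (M θ'2 φ'2) P, w⟫
        + ε * (|⟪act (Mθ θ'2 φ'2) P, w⟫| + |⟪act (Mφ θ'2 φ'2) P, w⟫|)
        + 2 * ε ^ 2) :
    ¬ ∃ θ1 φ1 θ2 φ2 α : ℝ,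
      |θ1 - θ'1| ≤ ε ∧ |φ1 - φ'1| ≤ ε ∧ |θ2 - θ'2| ≤ ε ∧ |φ2 - φ'2| ≤ ε ∧ |α - α'| ≤ ε ∧
      act (R α) '' (act (M θ1 φ1) '' V) ⊆
        interior (convexHull ℝ (act (M θ2 φ2) '' V)) :=
  global_theorem_general V hfin hrad S hS ε θ'1 φ'1 θ'2 φ'2 α' w hw hGH
end
end

section
/- Let ε > 0, let P1, P2, P3 ∈ ℝ³ with ‖P_i‖ ≤ 1 be ε-spanning for (θ̄, φ̄), and let θ, φ ∈ ℝ with |θ − θ̄| ≤ ε and |φ − φ̄| ≤ ε. Assume ⟨X(θ,φ), P_i⟩ > 0 for i = 1, 2, 3. Then X(θ,φ) ∈ span⁺(P1, P2, P3). -/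
noncomputable section

open Real

open scoped RealInnerProductSpace

/-- The rotation matrix by the angle π/2. -/
def Rhalfpi : Matrix (Fin 2) (Fin 2) ℝ := !![0, -1; 1, 0]

/-- Three points are ε-spanning for `(θ, φ)` if the projected triangle robustly
contains the origin. -/
def EpsSpanning (ε θ φ : ℝ) (P1 P2 P3 : EuclideanSpace ℝ (Fin 3)) : Prop :=
  ⟪act Rhalfpi (act (M θ φ) P1), act (M θ φ) P2⟫ > 2 * ε * (Real.sqrt 2 + ε) ∧
  ⟪act Rhalfpi (act (M θ φ) P2), act (M θ φ) P3⟫ > 2 * ε * (Real.sqrt 2 + ε) ∧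
  ⟪act Rhalfpi (act (M θ φ) P3), act (M θ φ) P1⟫ > 2 * ε * (Real.sqrt 2 + ε)

/-- The simplicial cone spanned by three vectors with strictly positive coefficients. -/
def spanPos (v1 v2 v3 : EuclideanSpace ℝ (Fin 3)) : Set (EuclideanSpace ℝ (Fin 3)) :=
  {w | ∃ l1 l2 l3 : ℝ, 0 < l1 ∧ 0 < l2 ∧ 0 < l3 ∧ w = l1 • v1 + l2 • v2 + l3 • v3}


/-!
The rows of `M θ φ` together with `X θ φ` form a positively oriented orthonormal frame, so the
ε-spanning condition says that the triple products `⟪X θ' φ', Pᵢ × Pⱼ⟫` exceed `2ε(√2 + ε)`.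
Since `‖X θ φ - X θ' φ'‖ ≤ 2ε` and `‖Pᵢ × Pⱼ‖ ≤ 1`, the triple products `⟪X θ φ, Pᵢ × Pⱼ⟫` stay
positive. By Cramer's rule `det(P₁, P₂, P₃) • v = ∑ ⟪v, Pⱼ × Pₖ⟫ • Pᵢ`; pairing this with
`v = X θ φ` and using `⟪X θ φ, Pᵢ⟫ > 0` shows `det(P₁, P₂, P₃) > 0`, so all coefficients are
positive.
-/

open Matrix

/-- Cramer's rule for the `3 × 3` system with columns `a`, `b`, `c`. -/
lemma dot_cross_smul_add_eq {R : Type*} [CommRing R] (v a b c : Fin 3 → R) :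
    (v ⬝ᵥ b ⨯₃ c) • a + (v ⬝ᵥ c ⨯₃ a) • b + (v ⬝ᵥ a ⨯₃ b) • c = (a ⬝ᵥ b ⨯₃ c) • v := by
  ext i
  fin_cases i <;>
    simp only [cross_apply, dotProduct, Fin.sum_univ_three, Fin.isValue, Fin.zero_eta, Fin.mk_one,
      Fin.reduceFinMk, cons_val_zero, cons_val_one, cons_val, Pi.add_apply, Pi.smul_apply,
      smul_eq_mul] <;>
    ring

def cross (P Q : EuclideanSpace ℝ (Fin 3)) : EuclideanSpace ℝ (Fin 3) :=
  WithLp.toLp 2 (P.ofLp ⨯₃ Q.ofLp)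

lemma EuclideanSpace.real_inner_eq_dotProduct {ι : Type*} [Fintype ι]
    (x y : EuclideanSpace ℝ ι) :
    ⟪x, y⟫ = x.ofLp ⬝ᵥ y.ofLp := by
  rw [EuclideanSpace.inner_eq_star_dotProduct, star_trivial, dotProduct_comm]

lemma inner_cross_smul_add_eq (v P1 P2 P3 : EuclideanSpace ℝ (Fin 3)) :
    ⟪v, cross P2 P3⟫ • P1 + ⟪v, cross P3 P1⟫ • P2 + ⟪v, cross P1 P2⟫ • P3 =
      ⟪P1, cross P2 P3⟫ • v := by
  simp only [EuclideanSpace.real_inner_eq_dotProduct, cross]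
  exact congrArg (WithLp.toLp 2) (dot_cross_smul_add_eq _ _ _ _)

lemma norm_cross_le (P Q : EuclideanSpace ℝ (Fin 3)) : ‖cross P Q‖ ≤ ‖P‖ * ‖Q‖ := by
  have hsq : ‖cross P Q‖ ^ 2 = ‖P‖ ^ 2 * ‖Q‖ ^ 2 - ⟪P, Q⟫ ^ 2 := by
    simp only [← real_inner_self_eq_norm_sq, EuclideanSpace.real_inner_eq_dotProduct, cross,
      cross_dot_cross, dotProduct_comm Q.ofLp P.ofLp]
    ring
  refine pow_le_pow_iff_left₀ (norm_nonneg _) (by positivity) two_ne_zero |>.1 ?_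
  nlinarith [sq_nonneg ⟪P, Q⟫]

lemma mem_spanPos_of_inner_cross_pos {v P1 P2 P3 : EuclideanSpace ℝ (Fin 3)}
    (h23 : 0 < ⟪v, cross P2 P3⟫) (h31 : 0 < ⟪v, cross P3 P1⟫) (h12 : 0 < ⟪v, cross P1 P2⟫)
    (h1 : 0 < ⟪v, P1⟫) (h2 : 0 < ⟪v, P2⟫) (h3 : 0 < ⟪v, P3⟫) :
    v ∈ spanPos P1 P2 P3 := by
  have hid := inner_cross_smul_add_eq v P1 P2 P3
  set d := ⟪P1, cross P2 P3⟫
  have hd : 0 < d := by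
    have hv := congrArg (⟪v, ·⟫) hid
    simp only [inner_add_right, real_inner_smul_right] at hv
    have : 0 < d * ⟪v, v⟫ := by rw [← hv]; positivity
    exact pos_of_mul_pos_left this real_inner_self_nonneg
  refine ⟨⟪v, cross P2 P3⟫ / d, ⟪v, cross P3 P1⟫ / d, ⟪v, cross P1 P2⟫ / d,
    by positivity, by positivity, by positivity, ?_⟩
  rw [div_eq_inv_mul, div_eq_inv_mul, div_eq_inv_mul, ← smul_smul, ← smul_smul, ← smul_smul,
    ← smul_add, ← smul_add, hid, smul_smul, inv_mul_cancel₀ hd.ne', one_smul]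

lemma real_inner_pos_of_norm_sub_mul_lt {E : Type*} [NormedAddCommGroup E]
    [InnerProductSpace ℝ E] {x y c : E} (h : ‖x - y‖ * ‖c‖ < ⟪y, c⟫) : 0 < ⟪x, c⟫ := by
  have := real_inner_le_norm (y - x) c
  rw [inner_sub_left, norm_sub_rev] at this
  linarith

lemma inner_act_Rhalfpi_act_M (θ φ : ℝ) (P Q : EuclideanSpace ℝ (Fin 3)) :
    ⟪act Rhalfpi (act (M θ φ) P), act (M θ φ) Q⟫ = ⟪X θ φ, cross P Q⟫ := by
  simp only [act, Rhalfpi, M, X, cross, cross_apply, EuclideanSpace.real_inner_eq_dotProduct,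
    dotProduct, ofLp_toLpLin, toLin'_apply, cons_mulVec, empty_mulVec, mulVec, of_apply, cons_val',
    cons_val_fin_one, Fin.sum_univ_two, Fin.sum_univ_three, Fin.isValue, cons_val_zero,
    cons_val_one, cons_val, WithLp.equiv_symm_apply, neg_mul, zero_mul, one_mul, add_zero, zero_add, neg_add_rev, neg_neg]
  linear_combination (cos φ * (P 0 * Q 1 - P 1 * Q 0)) * sin_sq_add_cos_sq θ

lemma sq_cos_sub_cos_add_sq_sin_sub_sin_le (a b : ℝ) :
    (cos a - cos b) ^ 2 + (sin a - sin b) ^ 2 ≤ (a - b) ^ 2 := by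
  have hcos : 1 - (a - b) ^ 2 / 2 ≤ cos (a - b) := one_sub_sq_div_two_le_cos
  have hchord : (cos a - cos b) ^ 2 + (sin a - sin b) ^ 2 = 2 - 2 * cos (a - b) := by
    rw [cos_sub]
    linear_combination sin_sq_add_cos_sq a + sin_sq_add_cos_sq b
  linarith

lemma norm_X_sub_X_left_le (θ θ' φ : ℝ) : ‖X θ φ - X θ' φ‖ ≤ |θ - θ'| := by
  rw [← abs_norm]
  refine sq_le_sq.1 ?_
  simp only [X, WithLp.equiv_symm_apply, EuclideanSpace.norm_sq_eq, PiLp.sub_apply, norm_eq_abs,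
    sq_abs, Fin.sum_univ_three, Fin.isValue, cons_val_zero, cons_val_one, cons_val, sub_self,
    ne_eq, OfNat.ofNat_ne_zero, not_false_eq_true, zero_pow, add_zero]
  nlinarith [sq_cos_sub_cos_add_sq_sin_sub_sin_le θ θ', sin_sq_le_one φ]

lemma norm_X_sub_X_right_le (θ φ φ' : ℝ) : ‖X θ φ - X θ φ'‖ ≤ |φ - φ'| := by
  rw [← abs_norm]
  refine sq_le_sq.1 ?_
  simp only [X, WithLp.equiv_symm_apply, EuclideanSpace.norm_sq_eq, PiLp.sub_apply, norm_eq_abs,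
    sq_abs, Fin.sum_univ_three, Fin.isValue, cons_val_zero, cons_val_one, cons_val]
  nlinarith [sq_cos_sub_cos_add_sq_sin_sub_sin_le φ φ', sin_sq_add_cos_sq θ]

lemma norm_X_sub_X_le (θ θ' φ φ' : ℝ) : ‖X θ φ - X θ' φ'‖ ≤ |θ - θ'| + |φ - φ'| :=
  (norm_sub_le_norm_sub_add_norm_sub _ (X θ' φ) _).trans
    (add_le_add (norm_X_sub_X_left_le θ θ' φ) (norm_X_sub_X_right_le θ' φ φ'))

/-- For ε-spanning points, the perturbed projection direction lies in their positive span. -/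
theorem X_mem_spanPos (ε θ' φ' θ φ : ℝ) (hε : 0 < ε)
    (P1 P2 P3 : EuclideanSpace ℝ (Fin 3))
    (hP1 : ‖P1‖ ≤ 1) (hP2 : ‖P2‖ ≤ 1) (hP3 : ‖P3‖ ≤ 1)
    (hspan : EpsSpanning ε θ' φ' P1 P2 P3)
    (hθ : |θ - θ'| ≤ ε) (hφ : |φ - φ'| ≤ ε)
    (h1 : ⟪X θ φ, P1⟫ > 0) (h2 : ⟪X θ φ, P2⟫ > 0) (h3 : ⟪X θ φ, P3⟫ > 0) :
    X θ φ ∈ spanPos P1 P2 P3 := by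
  obtain ⟨hs12, hs23, hs31⟩ := hspan
  simp only [inner_act_Rhalfpi_act_M] at hs12 hs23 hs31
  have hX : ‖X θ φ - X θ' φ'‖ ≤ 2 * ε := (norm_X_sub_X_le θ θ' φ φ').trans (by linarith)
  have hmargin : 2 * ε < 2 * ε * (√2 + ε) := by nlinarith [one_lt_sqrt_two]
  have hcross {P Q : EuclideanSpace ℝ (Fin 3)} (hP : ‖P‖ ≤ 1) (hQ : ‖Q‖ ≤ 1)
      (h : 2 * ε * (√2 + ε) < ⟪X θ' φ', cross P Q⟫) : 0 < ⟪X θ φ, cross P Q⟫ := by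
    refine real_inner_pos_of_norm_sub_mul_lt (lt_of_le_of_lt ?_ (hmargin.trans h))
    calc ‖X θ φ - X θ' φ'‖ * ‖cross P Q‖ ≤ 2 * ε * (1 * 1) :=
          mul_le_mul hX ((norm_cross_le P Q).trans (mul_le_mul hP hQ (norm_nonneg _) zero_le_one))
            (norm_nonneg _) (by positivity)
      _ = 2 * ε := by ring
  exact mem_spanPos_of_inner_cross_pos (hcross hP2 hP3 hs23) (hcross hP3 hP1 hs31)
    (hcross hP1 hP2 hs12) h1 h2 h3
end
end
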